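/- Let λ, μ, ψ, ρ be real parameters with λ > 0. Define functions G, H : ℝ → ℝ solving the final-value ODE system -G'/G = λG + μ/G - (λ+μ+ψ), -H'/H = 2λG - (λ+μ+ψ), with G(T) = 1 - ρ and H(T) = 1. Then for any integers x ≥ ℓ ≥ 0, the function F(s,x) = C · G(s)^{x-ℓ} · H(s)^{ℓ} · x!/(x-ℓ)! (with C constant in s) satisfies, on any interval where ℓ is constant, the backward equation -∂F/∂s = λ x (1 - binom(ℓ,2)/binom(x+1,2)) · ((x+1)/(x+1-ℓ)) · F·G + μ(x-ℓ)·F/G - (λ+μ+ψ) x F; equivalently, substituting the ansatz into -∂F/∂s = λx(1 - binom(ℓ,2)/binom(x+1,2)) F(s,x+1) + μx F(s,x-1) - (λ+μ+ψ)x F(s,x) reduces exactly to the two scalar ODEs for G and H. -/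
import Mathlib

private lemma aux_pow (m : ℕ) (a b : ℝ) :
    (m:ℝ) * a ^ (m-1) * (-(a*b)) = -((m:ℝ) * a ^ m * b) := by
  cases m with
  | zero => simp
  | succ k => push_cast; rw [pow_succ]; ring

/-- Verification of the ansatz for the linear birth-death adjoint filter
equation: if `G`, `H` solve `-G'/G = λG + μ/G - (λ+μ+ψ)` and
`-H'/H = 2λG - (λ+μ+ψ)` with `G(T) = 1-ρ`, `H(T) = 1`, then
`F(s,x) = C·G(s)^{x-ℓ}·H(s)^ℓ·x!/(x-ℓ)!` satisfies, for every `x ≥ ℓ`,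
`-∂F/∂s = λx(1 - binom(ℓ,2)/binom(x+1,2)) F(s,x+1) + μx F(s,x-1) - (λ+μ+ψ)x F(s,x)`. -/
theorem birth_death_ansatz_verification
    (lam mu psi rho T C : ℝ) (hlam : 0 < lam)
    (G H : ℝ → ℝ) (ℓ : ℕ)
    (hGne : ∀ s, G s ≠ 0)
    (hGT : G T = 1 - rho) (hHT : H T = 1)
    (hG : ∀ s, HasDerivAt G
      (-(G s * (lam * G s + mu / G s - (lam + mu + psi)))) s)
    (hH : ∀ s, HasDerivAt H
      (-(H s * (2 * lam * G s - (lam + mu + psi)))) s)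
    (F : ℝ → ℕ → ℝ)
    (hF : ∀ s x, F s x = C * G s ^ (x - ℓ) * H s ^ ℓ * (Nat.descFactorial x ℓ : ℝ)) :
    ∀ (x : ℕ), ℓ ≤ x → ∀ s : ℝ,
      HasDerivAt (fun s => F s x)
        (-(lam * x * (1 - (ℓ.choose 2 : ℝ) / ((x + 1).choose 2 : ℝ)) * F s (x + 1)
            + mu * x * F s (x - 1)
            - (lam + mu + psi) * x * F s x)) s := by
  intro x hx s
  have hgne := hGne s
  simp only [hF]
  have key : HasDerivAt
      (fun s => C * G s ^ (x - ℓ) * H s ^ ℓ * (Nat.descFactorial x ℓ : ℝ))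
      ((C * ((x - ℓ : ℕ) * G s ^ (x - ℓ - 1)
            * (-(G s * (lam * G s + mu / G s - (lam + mu + psi))))) * H s ^ ℓ
          + C * G s ^ (x - ℓ)
            * ((ℓ:ℝ) * H s ^ (ℓ - 1) * (-(H s * (2 * lam * G s - (lam + mu + psi))))))
        * (Nat.descFactorial x ℓ : ℝ)) s :=
    ((((hG s).pow _).const_mul C).mul ((hH s).pow ℓ)).mul_const _
  convert key using 1
  obtain ⟨n, rfl⟩ := le_iff_exists_add.mp hx
  have e1 : ℓ + n - ℓ = n := by omega
  have e2 : ℓ + n + 1 - ℓ = n + 1 := by omega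
  have e3 : ℓ + n - 1 - ℓ = n - 1 := by omega
  rw [aux_pow, aux_pow, e1, e2, e3]
  rcases Nat.eq_zero_or_pos (ℓ + n) with h0 | hpos
  · obtain ⟨hℓ0, hn0⟩ := Nat.add_eq_zero.mp h0
    subst hℓ0; subst hn0
    norm_num
  · have hxpos : (0:ℝ) < (ℓ:ℝ) + (n:ℝ) := by
      have : (0:ℝ) < ((ℓ + n : ℕ) : ℝ) := Nat.cast_pos.mpr hpos
      push_cast at this; exact this
    have hxne : ((ℓ : ℝ) + (n:ℝ)) ≠ 0 := hxpos.ne'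
    have hch : (((ℓ + n + 1).choose 2 : ℕ) : ℝ) = ((ℓ:ℝ) + n + 1) * ((ℓ:ℝ) + n) / 2 := by
      rw [Nat.cast_choose_two]; push_cast; ring
    have hchne : (((ℓ + n + 1).choose 2 : ℕ) : ℝ) ≠ 0 := by
      rw [hch]; positivity
    have hcl : ((ℓ.choose 2 : ℕ) : ℝ) = (ℓ:ℝ) * ((ℓ:ℝ) - 1) / 2 := Nat.cast_choose_two (K := ℝ) ℓ
    have hd1 : (((ℓ + n + 1).descFactorial ℓ : ℕ) : ℝ)
        = ((ℓ:ℝ) + n + 1) * ((ℓ + n).descFactorial ℓ : ℕ) / ((n:ℝ) + 1) := by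
      have hnat := Nat.succ_descFactorial (ℓ + n) ℓ
      rw [e2] at hnat
      have h2 : ((n:ℝ) + 1) * ((ℓ + n + 1).descFactorial ℓ : ℕ)
          = ((ℓ:ℝ) + n + 1) * ((ℓ + n).descFactorial ℓ : ℕ) := by exact_mod_cast hnat
      field_simp
      linarith [h2]
    rw [hch, hcl, hd1]
    rcases Nat.eq_zero_or_pos n with hn0 | hnpos
    · subst hn0
      have hdz : (ℓ + 0 - 1).descFactorial ℓ = 0 := by
        apply Nat.descFactorial_eq_zero_iff_lt.mpr; omega
      rw [hdz]
      have hℓne : (ℓ:ℝ) ≠ 0 := Nat.cast_ne_zero.mpr (by omega)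
      push_cast
      field_simp
      ring
    · obtain ⟨m, rfl⟩ : ∃ m, n = m + 1 := ⟨n - 1, by omega⟩
      have hd2 : (((ℓ + (m + 1) - 1).descFactorial ℓ : ℕ) : ℝ)
          = ((m:ℝ) + 1) * ((ℓ + (m + 1)).descFactorial ℓ : ℕ) / ((ℓ:ℝ) + (m + 1)) := by
        have hnat := Nat.succ_descFactorial (ℓ + (m + 1) - 1) ℓ
        have e4 : ℓ + (m + 1) - 1 + 1 = ℓ + (m + 1) := by omega
        have e5 : ℓ + (m + 1) - 1 + 1 - ℓ = m + 1 := by omega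
        rw [e5, e4] at hnat
        have h2 : ((m:ℝ) + 1) * ((ℓ + (m + 1)).descFactorial ℓ : ℕ)
            = ((ℓ:ℝ) + (m + 1)) * ((ℓ + (m + 1) - 1).descFactorial ℓ : ℕ) := by
          exact_mod_cast hnat
        rw [eq_div_iff (by push_cast at hxne ⊢; exact hxne)]
        linarith [h2]
      rw [hd2]
      have e6 : m + 1 - 1 = m := by omega
      rw [e6, pow_succ]
      push_cast
      field_simp
      ring
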